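/- (τ-symbol independence) On a step-2 nilpotent Lie group, for a convolution operator with kernel k, the τ-symbol a_τ(h,ν) = k̂(ᵗL⁻¹_{τh+(1-τ)g}(ν)) evaluated along the diagonal pairing equals k̂(ᵗL⁻¹_h(ν)) for every τ ∈ [0,1]; i.e., the τ-symbol does not depend on τ. -/

import Mathlib

open MeasureTheory

/-- Euclidean dot product on ℝᴺ. -/
def dot {N : ℕ} (a b : Fin N → ℝ) : ℝ := ∑ i, a i * b i

/-- `L_h(w) = -w - (1/2)[h,w]`. -/
noncomputable def Lop {N : ℕ} (B : (Fin N → ℝ) →ₗ[ℝ] (Fin N → ℝ) →ₗ[ℝ] (Fin N → ℝ))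
    (h w : Fin N → ℝ) : Fin N → ℝ :=
  -w - (1 / 2 : ℝ) • B h w

/-- The inverse `L_h⁻¹(w) = -w + (1/2)[h,w]` (valid for step-2 nilpotent brackets). -/
noncomputable def Linv {N : ℕ} (B : (Fin N → ℝ) →ₗ[ℝ] (Fin N → ℝ) →ₗ[ℝ] (Fin N → ℝ))
    (h w : Fin N → ℝ) : Fin N → ℝ :=
  -w + (1 / 2 : ℝ) • B h w

/-- The inverse transpose `ᵗL_h⁻¹` with respect to the Euclidean pairing:
`(ᵗL_h⁻¹ ν)ᵢ = ⟨L_h⁻¹ eᵢ, ν⟩`. -/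
noncomputable def tLinv {N : ℕ} (B : (Fin N → ℝ) →ₗ[ℝ] (Fin N → ℝ) →ₗ[ℝ] (Fin N → ℝ))
    (h ν : Fin N → ℝ) : Fin N → ℝ :=
  fun i => dot (Linv B h (Pi.single i 1)) ν

/-!
Fix `g` and put `x = τh + (1-τ)g`, so that `d := h - x = (1-τ)(h-g)`. Writing
`ᵗL_y⁻¹ = -1 + ½ ᵗad y`, the step-2 condition `ᵗad a * ᵗad b = 0` makes the substitution
`ν ↦ (1 + ½ ᵗad d) ν` unipotent (so it preserves Lebesgue measure) and turns `ᵗL_h⁻¹` into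
`ᵗL_x⁻¹`, while the phase `⟨h-g, ν⟩` only changes by `½ ⟨[d, h-g], ν⟩ = 0`.
Hence the inner `ν`-integrals already agree for each `g`.
-/

open Matrix

open Polynomial in
theorem Matrix.det_one_add_of_isNilpotent {n R : Type*} [Fintype n] [DecidableEq n] [CommRing R]
    [IsReduced R] {M : Matrix n n R} (hM : IsNilpotent M) : (1 + M).det = 1 := by
  have hunit := isUnit_iff_coeff_isUnit_isNilpotent.mp (isUnit_charpolyRev_of_isNilpotent hM.neg)
  have hconst : (-M).charpolyRev = 1 := by
    ext i
    rcases eq_or_ne i 0 with rfl | hi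
    · simp [coeff_zero_eq_eval_zero]
    · simp [(hunit.2 i hi).eq_zero, coeff_one, hi]
  have heval : (1 - (X : R[X]) • (-M).map C).map (eval 1) = 1 + M := by
    ext i j
    rcases eq_or_ne i j with rfl | hij <;> simp [*]
  have := congrArg (eval 1) hconst
  rwa [charpolyRev, ← coe_evalRingHom, RingHom.map_det, RingHom.mapMatrix_apply, coe_evalRingHom,
    heval, eval_one] at this

theorem MeasureTheory.integral_comp_linearMap_of_det_eq_one {E F : Type*} [NormedAddCommGroup E]
    [NormedSpace ℝ E] [MeasurableSpace E] [BorelSpace E] [FiniteDimensional ℝ E]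
    (μ : Measure E) [μ.IsAddHaarMeasure] [NormedAddCommGroup F] [NormedSpace ℝ F]
    {Φ : E →ₗ[ℝ] E} (hΦ : LinearMap.det Φ = 1) (f : E → F) :
    ∫ x, f (Φ x) ∂μ = ∫ x, f x ∂μ := by
  have hne : LinearMap.det Φ ≠ 0 := by simp [hΦ]
  have hmp : MeasurePreserving Φ μ μ :=
    ⟨Φ.continuous_of_finiteDimensional.measurable, by
      simp [Measure.map_linearMap_addHaar_eq_smul_addHaar μ hne, hΦ]⟩
  exact hmp.integral_comp
    (Φ.equivOfDetNeZero hne).toContinuousLinearEquiv.toHomeomorph.measurableEmbedding f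

section TransposeAd

variable {N : ℕ} (B : (Fin N → ℝ) →ₗ[ℝ] (Fin N → ℝ) →ₗ[ℝ] (Fin N → ℝ))

lemma dot_eq_dotProduct (a b : Fin N → ℝ) : dot a b = a ⬝ᵥ b := rfl

def adTranspose (y : Fin N → ℝ) : Matrix (Fin N) (Fin N) ℝ := (LinearMap.toMatrix' (B y))ᵀ

lemma adTranspose_sub (x y : Fin N → ℝ) :
    adTranspose B (x - y) = adTranspose B x - adTranspose B y := by
  simp [adTranspose, transpose_sub]

lemma dot_adTranspose_mulVec (y w ν : Fin N → ℝ) :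
    dot w (adTranspose B y *ᵥ ν) = dot (B y w) ν := by
  rw [dot_eq_dotProduct, dot_eq_dotProduct, adTranspose, dotProduct_mulVec, vecMul_transpose,
    LinearMap.toMatrix'_mulVec]

lemma tLinv_eq (y ν : Fin N → ℝ) : tLinv B y ν = -ν + (1 / 2 : ℝ) • (adTranspose B y *ᵥ ν) := by
  ext i
  have hcoord := dot_adTranspose_mulVec B y (Pi.single i 1) ν
  rw [dot_eq_dotProduct, single_one_dotProduct] at hcoord
  simp only [tLinv, Linv, Pi.add_apply, Pi.neg_apply, Pi.smul_apply, hcoord, dot_eq_dotProduct,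
    add_dotProduct, neg_dotProduct, smul_dotProduct, single_one_dotProduct, smul_eq_mul]

noncomputable def shear (d : Fin N → ℝ) : Matrix (Fin N) (Fin N) ℝ :=
  1 + (1 / 2 : ℝ) • adTranspose B d

lemma shear_mulVec (d ν : Fin N → ℝ) :
    shear B d *ᵥ ν = ν + (1 / 2 : ℝ) • (adTranspose B d *ᵥ ν) := by
  rw [shear, add_mulVec, one_mulVec, smul_mulVec]

variable {B}

lemma adTranspose_mul_adTranspose (hnil : ∀ x y z, B x (B y z) = 0) (x y : Fin N → ℝ) :
    adTranspose B x * adTranspose B y = 0 := by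
  rw [adTranspose, adTranspose, ← transpose_mul, ← LinearMap.toMatrix'_comp]
  ext i j
  simp [LinearMap.toMatrix'_apply, hnil]

lemma det_shear (hnil : ∀ x y z, B x (B y z) = 0) (d : Fin N → ℝ) : (shear B d).det = 1 :=
  det_one_add_of_isNilpotent
    ⟨2, by rw [pow_two, smul_mul_smul, adTranspose_mul_adTranspose hnil, smul_zero]⟩

lemma dot_shear_mulVec {d w : Fin N → ℝ} (hdw : B d w = 0) (ν : Fin N → ℝ) :
    dot w (shear B d *ᵥ ν) = dot w ν := by
  rw [shear_mulVec, dot_eq_dotProduct, dotProduct_add, dotProduct_smul, ← dot_eq_dotProduct,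
    ← dot_eq_dotProduct, dot_adTranspose_mulVec, hdw]
  simp [dot_eq_dotProduct]

lemma tLinv_shear_mulVec (hnil : ∀ x y z, B x (B y z) = 0) (x y ν : Fin N → ℝ) :
    tLinv B x (shear B (x - y) *ᵥ ν) = tLinv B y ν := by
  rw [tLinv_eq, tLinv_eq, shear_mulVec, mulVec_add, mulVec_smul, mulVec_mulVec,
    adTranspose_mul_adTranspose hnil, zero_mulVec, adTranspose_sub, sub_mulVec]
  module

end TransposeAd

/-- τ-symbol independence: for a convolution kernel `k̂` on a step-2 nilpotent Lie
group, the τ-quantized operator built from the symbol `k̂(ᵗL⁻¹_{τh+(1-τ)g}(ν))`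
agrees with the one built from `k̂(ᵗL⁻¹_h(ν))`, for every τ; i.e. the τ-symbol does
not depend on τ. -/
theorem tau_symbol_independent (N : ℕ)
    (B : (Fin N → ℝ) →ₗ[ℝ] (Fin N → ℝ) →ₗ[ℝ] (Fin N → ℝ))
    (hanti : ∀ x y, B x y = -B y x)
    (hnil : ∀ x y z, B x (B y z) = 0)
    (khat u : (Fin N → ℝ) → ℂ) (h : Fin N → ℝ) (τ : ℝ) :
    (∫ g : Fin N → ℝ, ∫ ν : Fin N → ℝ,
        Complex.exp (Complex.I * (dot (h - g) ν : ℝ)) *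
          khat (tLinv B (τ • h + (1 - τ) • g) ν) * u g) =
    (∫ g : Fin N → ℝ, ∫ ν : Fin N → ℝ,
        Complex.exp (Complex.I * (dot (h - g) ν : ℝ)) *
          khat (tLinv B h ν) * u g) := by
  congr 1 with g
  set x := τ • h + (1 - τ) • g
  have hphase : B (h - x) (h - g) = 0 := by
    rw [show h - x = (1 - τ) • (h - g) by module, map_smul, LinearMap.smul_apply,
      self_eq_neg.mp (hanti _ _), smul_zero]
  have hdet : LinearMap.det (toLin' (shear B (h - x))) = 1 := by
    rw [LinearMap.det_toLin', det_shear hnil]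
  conv_rhs => rw [← integral_comp_linearMap_of_det_eq_one volume hdet]
  simp only [toLin'_apply, dot_shear_mulVec hphase, tLinv_shear_mulVec hnil]
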